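/- Let p̂ = [[0, u], [v, q]] be a block matrix over a unital algebra with q invertible, and let p = −u q^{-1} v. Then for any scalar z such that z − p is invertible, the block matrix Λ(z) − p̂ (where Λ(z) = diag(z, 0, …, 0)) is invertible, and its (1,1) block of the inverse equals (z − p)^{-1}. -/
import Mathlib


open Matrix

private lemma schur_aux {α l n : Type*} [Ring α] [Fintype l] [Fintype n]
    [DecidableEq l] [DecidableEq n]
    (A : Matrix l l α) (B : Matrix l n α) (C : Matrix n l α) (D : Matrix n n α)
    (d : Matrix n n α) (hd1 : D * d = 1) (hd2 : d * D = 1)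
    (s : Matrix l l α) (hs1 : (A - B * d * C) * s = 1) (hs2 : s * (A - B * d * C) = 1) :
    (fromBlocks A B C D) *
        (fromBlocks 1 0 (-(d*C)) 1 * (fromBlocks s 0 0 d * fromBlocks 1 (-(B*d)) 0 1)) = 1 ∧
      (fromBlocks 1 0 (-(d*C)) 1 * (fromBlocks s 0 0 d * fromBlocks 1 (-(B*d)) 0 1)) *
        (fromBlocks A B C D) = 1 ∧
      (fromBlocks 1 0 (-(d*C)) 1 *
        (fromBlocks s 0 0 d * fromBlocks 1 (-(B*d)) 0 1)).toBlocks₁₁ = s := by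
  have key1 : d * (D * (d * C)) = d * C := by
    rw [← Matrix.mul_assoc d D, hd2, Matrix.one_mul]
  have key2 : B * (d * D) = B := by rw [hd2, Matrix.mul_one]
  have key3 : D * (d * C) = C := by rw [← Matrix.mul_assoc, hd1, Matrix.one_mul]
  rw [Matrix.mul_assoc B d C] at hs1 hs2
  have hM : fromBlocks A B C D
      = fromBlocks 1 (B*d) 0 1 * (fromBlocks (A - B*(d*C)) 0 0 D * fromBlocks 1 0 (d*C) 1) := by
    simp only [Matrix.fromBlocks_multiply, Matrix.one_mul, Matrix.mul_one, Matrix.zero_mul,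
      Matrix.mul_zero, add_zero, zero_add, Matrix.mul_assoc, key1, key2, key3,
      sub_add_cancel]
  have hUU' : (fromBlocks 1 0 (d*C) 1 : Matrix (l ⊕ n) (l ⊕ n) α)
      * fromBlocks 1 0 (-(d*C)) 1 = 1 := by
    simp [Matrix.fromBlocks_multiply, ← Matrix.fromBlocks_one]
  have hU'U : (fromBlocks 1 0 (-(d*C)) 1 : Matrix (l ⊕ n) (l ⊕ n) α)
      * fromBlocks 1 0 (d*C) 1 = 1 := by
    simp [Matrix.fromBlocks_multiply, ← Matrix.fromBlocks_one]
  have hLL' : (fromBlocks 1 (B*d) 0 1 : Matrix (l ⊕ n) (l ⊕ n) α)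
      * fromBlocks 1 (-(B*d)) 0 1 = 1 := by
    simp [Matrix.fromBlocks_multiply, ← Matrix.fromBlocks_one]
  have hL'L : (fromBlocks 1 (-(B*d)) 0 1 : Matrix (l ⊕ n) (l ⊕ n) α)
      * fromBlocks 1 (B*d) 0 1 = 1 := by
    simp [Matrix.fromBlocks_multiply, ← Matrix.fromBlocks_one]
  have hΔΔ' : (fromBlocks (A - B*(d*C)) 0 0 D : Matrix (l ⊕ n) (l ⊕ n) α)
      * fromBlocks s 0 0 d = 1 := by
    simp [Matrix.fromBlocks_multiply, hs1, hd1, ← Matrix.fromBlocks_one]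
  have hΔ'Δ : (fromBlocks s 0 0 d : Matrix (l ⊕ n) (l ⊕ n) α)
      * fromBlocks (A - B*(d*C)) 0 0 D = 1 := by
    simp [Matrix.fromBlocks_multiply, hs2, hd2, ← Matrix.fromBlocks_one]
  refine ⟨?_, ?_, ?_⟩
  · rw [hM]
    simp only [Matrix.mul_assoc]
    rw [← Matrix.mul_assoc (fromBlocks 1 0 (d*C) 1) (fromBlocks 1 0 (-(d*C)) 1), hUU',
      Matrix.one_mul, ← Matrix.mul_assoc (fromBlocks (A - B*(d*C)) 0 0 D) (fromBlocks s 0 0 d),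
      hΔΔ', Matrix.one_mul, hLL']
  · rw [hM]
    simp only [Matrix.mul_assoc]
    rw [← Matrix.mul_assoc (fromBlocks 1 (-(B*d)) 0 1) (fromBlocks 1 (B*d) 0 1), hL'L,
      Matrix.one_mul, ← Matrix.mul_assoc (fromBlocks s 0 0 d)
        (fromBlocks (A - B*(d*C)) 0 0 D), hΔ'Δ, Matrix.one_mul, hU'U]
  · simp [Matrix.fromBlocks_multiply, Matrix.toBlocks_fromBlocks₁₁]

/-- Schur complement formula underlying linearization: for `p̂ = [[0,u],[v,q]]` over a unital
algebra with `q` invertible and `p = −u q⁻¹ v`, if `z − p` is invertible then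
`Λ(z) − p̂` (with `Λ(z) = diag(z,0,…,0)`) is invertible and the `(1,1)` block of its
inverse equals `(z − p)⁻¹`. -/
theorem linearization_schur {A : Type*} [Ring A] {m : ℕ}
    (u : Matrix (Fin 1) (Fin m) A) (v : Matrix (Fin m) (Fin 1) A)
    (q : Matrix (Fin m) (Fin m) A) (hq : IsUnit q)
    (p z : A) (hp : p = -(u * Ring.inverse q * v) 0 0) (hz : IsUnit (z - p)) :
    IsUnit (Matrix.fromBlocks (Matrix.of fun _ _ => z) 0 0 0
        - Matrix.fromBlocks (0 : Matrix (Fin 1) (Fin 1) A) u v q) ∧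
      (Ring.inverse (Matrix.fromBlocks (Matrix.of fun _ _ => z) 0 0 0
          - Matrix.fromBlocks (0 : Matrix (Fin 1) (Fin 1) A) u v q)).toBlocks₁₁ 0 0
        = Ring.inverse (z - p) := by
  set d : Matrix (Fin m) (Fin m) A := -(Ring.inverse q) with hd
  set s : Matrix (Fin 1) (Fin 1) A := Matrix.of fun _ _ => Ring.inverse (z - p) with hs
  have hd1 : (-q) * d = 1 := by
    rw [hd, Matrix.neg_mul, Matrix.mul_neg, neg_neg, Ring.mul_inverse_cancel _ hq]
  have hd2 : d * (-q) = 1 := by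
    rw [hd, Matrix.neg_mul, Matrix.mul_neg, neg_neg, Ring.inverse_mul_cancel _ hq]
  have hSeq : (Matrix.of fun _ _ => z : Matrix (Fin 1) (Fin 1) A) - (-u) * d * (-v)
      = Matrix.of fun _ _ => (z - p) := by
    ext i j
    fin_cases i; fin_cases j
    simp [hd, hp, Matrix.neg_mul, Matrix.mul_neg, Matrix.sub_apply, Matrix.neg_apply]
  have hs1 : ((Matrix.of fun _ _ => z : Matrix (Fin 1) (Fin 1) A) - (-u) * d * (-v)) * s = 1 := by
    rw [hSeq]
    ext i j
    fin_cases i; fin_cases j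
    simp [hs, Matrix.mul_apply, Matrix.one_apply, Ring.mul_inverse_cancel _ hz]
  have hs2 : s * ((Matrix.of fun _ _ => z : Matrix (Fin 1) (Fin 1) A) - (-u) * d * (-v)) = 1 := by
    rw [hSeq]
    ext i j
    fin_cases i; fin_cases j
    simp [hs, Matrix.mul_apply, Matrix.one_apply, Ring.inverse_mul_cancel _ hz]
  obtain ⟨h1, h2, h3⟩ := schur_aux (Matrix.of fun _ _ => z) (-u) (-v) (-q) d hd1 hd2 s hs1 hs2
  have hM0 : (Matrix.fromBlocks (Matrix.of fun _ _ => z) 0 0 0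
        - Matrix.fromBlocks (0 : Matrix (Fin 1) (Fin 1) A) u v q)
      = Matrix.fromBlocks (Matrix.of fun _ _ => z) (-u) (-v) (-q) := by
    ext i j
    rcases i with i | i <;> rcases j with j | j <;>
      simp [Matrix.fromBlocks, Matrix.sub_apply]
  rw [hM0]
  haveI hInv : Invertible (Matrix.fromBlocks (Matrix.of fun _ _ => z) (-u) (-v) (-q)) :=
    ⟨_, h2, h1⟩
  refine ⟨isUnit_of_invertible _, ?_⟩
  rw [Ring.inverse_invertible]
  have hN := invOf_eq_right_inv h1
  rw [hN, h3]
  rfl
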